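/- arXiv:2408.00693 — 2 statements merged into one kernel-verified Lean document; each statement's English description precedes it below -/
import Mathlib

section
/- (Theorem 1) For every k ≥ 1 and every y ∈ ℂ^k there exists z ∈ K_k(A, r₀) such that ‖r₀ − A z‖₂ ≤ ‖W‖₂ · ‖Λ y − 𝟙‖₂; consequently the k-th GMRES residual norm min_{z ∈ K_k(A,r₀)} ‖r₀ − A z‖₂ is bounded above by ‖W‖₂ · min_{y ∈ ℂ^k} ‖Λ y − 𝟙‖₂. -/
/-- The Euclidean (ℓ²) norm of a complex vector. -/
noncomputable def euclNorm {m : ℕ} (x : Fin m → ℂ) : ℝ :=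
  Real.sqrt (∑ t, ‖x t‖ ^ 2)

/-- The operator 2-norm of a complex matrix (induced by Euclidean norms). -/
noncomputable def l2OpNorm {m k : ℕ} (W : Matrix (Fin m) (Fin k) ℂ) : ℝ :=
  ‖LinearMap.toContinuousLinearMap (Matrix.toEuclideanLin W)‖

/-!
Take `z = ∑ⱼ yⱼ Aʲ r₀ ∈ K_k(A, r₀)`. Since `r₀ = ∑ᵢ cᵢ vᵢ` and `A vᵢ = λᵢ vᵢ`, every power of `A`
acts on `r₀` coordinatewise in the eigenbasis, so `A z = ∑ᵢ cᵢ (Λ y)ᵢ vᵢ` and the residual is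
`r₀ - A z = ∑ᵢ cᵢ (1 - (Λ y)ᵢ) vᵢ = W (𝟙 - Λ y)`. Its norm is at most `‖W‖₂ ‖Λ y - 𝟙‖₂`, and
taking infima gives the GMRES bound.
-/

open Matrix

lemma euclNorm_eq_norm_toLp {m : ℕ} (x : Fin m → ℂ) : euclNorm x = ‖WithLp.toLp 2 x‖ := by
  rw [EuclideanSpace.norm_eq]; rfl

lemma euclNorm_nonneg {m : ℕ} (x : Fin m → ℂ) : 0 ≤ euclNorm x :=
  Real.sqrt_nonneg _

lemma euclNorm_sub_comm {m : ℕ} (x y : Fin m → ℂ) : euclNorm (x - y) = euclNorm (y - x) := by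
  rw [euclNorm_eq_norm_toLp, euclNorm_eq_norm_toLp, WithLp.toLp_sub, WithLp.toLp_sub, norm_sub_rev]

lemma euclNorm_mulVec_le {m k : ℕ} (W : Matrix (Fin m) (Fin k) ℂ) (u : Fin k → ℂ) :
    euclNorm (W *ᵥ u) ≤ l2OpNorm W * euclNorm u := by
  rw [euclNorm_eq_norm_toLp, euclNorm_eq_norm_toLp]
  exact (LinearMap.toContinuousLinearMap (toEuclideanLin W)).le_opNorm (WithLp.toLp 2 u)

lemma l2OpNorm_nonneg {m k : ℕ} (W : Matrix (Fin m) (Fin k) ℂ) : 0 ≤ l2OpNorm W :=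
  norm_nonneg _

section Eigenvectors

variable {R m ι : Type*} [CommRing R] [Fintype m] [DecidableEq m] [Fintype ι]
  {A : Matrix m m R} {v : ι → m → R} {lam : ι → R}

lemma pow_mulVec_of_mulVec_eq_smul {x : m → R} {μ : R} (h : A *ᵥ x = μ • x) (j : ℕ) :
    (A ^ j) *ᵥ x = μ ^ j • x := by
  induction j with
  | zero => simp
  | succ j ih => rw [pow_succ, ← mulVec_mulVec, h, mulVec_smul, ih, smul_smul, pow_succ']

lemma pow_mulVec_sum_smul (heig : ∀ i, A *ᵥ v i = lam i • v i) (j : ℕ) (a : ι → R) :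
    (A ^ j) *ᵥ ∑ i, a i • v i = ∑ i, (lam i ^ j * a i) • v i := by
  simp only [mulVec_sum, mulVec_smul, pow_mulVec_of_mulVec_eq_smul (heig _), smul_smul, mul_comm]

omit [Fintype m] [DecidableEq m] in
lemma of_mul_mulVec (c : ι → R) (x : ι → R) :
    (of fun t i => c i * v i t) *ᵥ x = ∑ i, (x i * c i) • v i := by
  ext t
  simp only [mulVec, dotProduct, of_apply, Finset.sum_apply, Pi.smul_apply, smul_eq_mul]
  exact Finset.sum_congr rfl fun i _ => by ring

lemma mulVec_sum_smul_pow_mulVec (heig : ∀ i, A *ᵥ v i = lam i • v i) {k : ℕ} (y : Fin k → R)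
    (a : ι → R) :
    A *ᵥ ∑ j : Fin k, y j • (A ^ (j : ℕ)) *ᵥ ∑ i, a i • v i =
      ∑ i, (((of fun i (j : Fin k) => lam i ^ ((j : ℕ) + 1)) *ᵥ y) i * a i) • v i := by
  simp only [pow_mulVec_sum_smul heig, Finset.smul_sum, mulVec_sum, mulVec_smul, heig, smul_smul]
  rw [Finset.sum_comm]
  refine Finset.sum_congr rfl fun i _ => ?_
  simp only [← Finset.sum_smul, mulVec, dotProduct, of_apply, Finset.sum_mul]
  exact congrArg (· • v i) (Finset.sum_congr rfl fun j _ => by ring)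

lemma sub_mulVec_krylov_eq (heig : ∀ i, A *ᵥ v i = lam i • v i) {k : ℕ} (y : Fin k → R)
    (c : ι → R) :
    ∑ i, c i • v i - A *ᵥ ∑ j : Fin k, y j • (A ^ (j : ℕ)) *ᵥ ∑ i, c i • v i =
      (of fun t i => c i * v i t) *ᵥ
        ((fun _ => 1) - (of fun i (j : Fin k) => lam i ^ ((j : ℕ) + 1)) *ᵥ y) := by
  rw [mulVec_sum_smul_pow_mulVec heig, of_mul_mulVec, ← Finset.sum_sub_distrib]
  simp only [← sub_smul, Pi.sub_apply, sub_mul, one_mul]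

end Eigenvectors

lemma iInf_le_mul_iInf {α β : Type*} [Nonempty β] {f : α → ℝ} {g : β → ℝ} {C : ℝ}
    (hf : ∀ x, 0 ≤ f x) (hC : 0 ≤ C) (h : ∀ y, ∃ x, f x ≤ C * g y) :
    ⨅ x, f x ≤ C * ⨅ y, g y := by
  rw [Real.mul_iInf_of_nonneg hC]
  refine le_ciInf fun y => ?_
  obtain ⟨x, hx⟩ := h y
  exact ciInf_le_of_le ⟨0, by rintro _ ⟨x', rfl⟩; exact hf x'⟩ x hx

theorem gmres_residual_vandermonde_bound_general
    (n d : ℕ) (A : Matrix (Fin n) (Fin n) ℂ)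
    (v : Fin d → (Fin n → ℂ)) (lam : Fin d → ℂ) (c : Fin d → ℂ)
    (heig : ∀ i, A.mulVec (v i) = lam i • v i)
    (r₀ : Fin n → ℂ) (hr₀ : r₀ = ∑ i, c i • v i)
    (k : ℕ)
    (K : Submodule ℂ (Fin n → ℂ))
    (hK : K = Submodule.span ℂ (Set.range fun j : Fin k => (A ^ (j : ℕ)).mulVec r₀))
    (W : Matrix (Fin n) (Fin d) ℂ) (hW : W = Matrix.of fun t i => c i * v i t)
    (Λ : Matrix (Fin d) (Fin k) ℂ) (hΛ : Λ = Matrix.of fun i (j : Fin k) => lam i ^ ((j : ℕ) + 1)) :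
    (∀ y : Fin k → ℂ, ∃ z ∈ K,
        euclNorm (r₀ - A.mulVec z) ≤ l2OpNorm W * euclNorm (Λ.mulVec y - fun _ => 1)) ∧
      (⨅ z : K, euclNorm (r₀ - A.mulVec (z : Fin n → ℂ))) ≤
        l2OpNorm W * ⨅ y : Fin k → ℂ, euclNorm (Λ.mulVec y - fun _ => 1) := by
  have hbound : ∀ y : Fin k → ℂ, ∃ z ∈ K,
      euclNorm (r₀ - A *ᵥ z) ≤ l2OpNorm W * euclNorm (Λ *ᵥ y - fun _ => 1) := by
    intro y
    refine ⟨∑ j : Fin k, y j • (A ^ (j : ℕ)) *ᵥ r₀, ?_, ?_⟩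
    · rw [hK]
      exact Submodule.sum_mem _ fun j _ => Submodule.smul_mem _ _ (Submodule.subset_span ⟨j, rfl⟩)
    · rw [euclNorm_sub_comm (Λ *ᵥ y), hr₀, sub_mulVec_krylov_eq heig, hW, hΛ]
      exact euclNorm_mulVec_le _ _
  refine ⟨hbound, iInf_le_mul_iInf (fun _ => euclNorm_nonneg _) (l2OpNorm_nonneg W) fun y => ?_⟩
  obtain ⟨z, hz, hle⟩ := hbound y
  exact ⟨⟨z, hz⟩, hle⟩

/-- Theorem 1: for every `k ≥ 1` and every `y ∈ ℂ^k` there is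
`z ∈ K_k(A, r₀)` with `‖r₀ − A z‖₂ ≤ ‖W‖₂ ‖Λ y − 𝟙‖₂`; consequently
`min_{z ∈ K_k(A,r₀)} ‖r₀ − A z‖₂ ≤ ‖W‖₂ · min_{y ∈ ℂ^k} ‖Λ y − 𝟙‖₂`. -/
theorem gmres_residual_vandermonde_bound
    (n d : ℕ) (A : Matrix (Fin n) (Fin n) ℂ)
    (v : Fin d → (Fin n → ℂ)) (lam : Fin d → ℂ) (c : Fin d → ℂ)
    (hunit : ∀ i, euclNorm (v i) = 1)
    (heig : ∀ i, A.mulVec (v i) = lam i • v i)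
    (hnz : ∀ i, lam i ≠ 0) (hdist : Function.Injective lam)
    (r₀ : Fin n → ℂ) (hr₀ : r₀ = ∑ i, c i • v i)
    (k : ℕ) (hk : 1 ≤ k)
    (K : Submodule ℂ (Fin n → ℂ))
    (hK : K = Submodule.span ℂ (Set.range fun j : Fin k => (A ^ (j : ℕ)).mulVec r₀))
    (W : Matrix (Fin n) (Fin d) ℂ) (hW : W = Matrix.of fun t i => c i * v i t)
    (Λ : Matrix (Fin d) (Fin k) ℂ) (hΛ : Λ = Matrix.of fun i (j : Fin k) => lam i ^ ((j : ℕ) + 1)) :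
    (∀ y : Fin k → ℂ, ∃ z ∈ K,
        euclNorm (r₀ - A.mulVec z) ≤ l2OpNorm W * euclNorm (Λ.mulVec y - fun _ => 1)) ∧
      (⨅ z : K, euclNorm (r₀ - A.mulVec (z : Fin n → ℂ))) ≤
        l2OpNorm W * ⨅ y : Fin k → ℂ, euclNorm (Λ.mulVec y - fun _ => 1) :=
  gmres_residual_vandermonde_bound_general n d A v lam c heig r₀ hr₀ k K hK W hW Λ hΛ
end

section
/- (Eigenvectors are preserved by inner-iteration preconditioning) Let M, N be n×n complex matrices with M invertible, H = M⁻¹N, and P^{(l)} = (I + Σ_{i=1}^{l−1} H^i) M⁻¹ for l ≥ 1. If v ∈ ℂⁿ and μ ∈ ℂ satisfy H v = μ v, then P^{(l)} (M − N) v = (1 − μ^l) v; i.e., every eigenvector of H is an eigenvector of the preconditioned matrix P^{(l)}(M−N) for every l, with eigenvalue 1 − μ^l. -/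
/-- eigenvectors are preserved by inner-iteration preconditioning:
if `H v = μ v`, then `P^{(l)} (M − N) v = (1 − μ^l) v`, where `H = M⁻¹N` and
`P^{(l)} = (I + ∑_{i=1}^{l−1} H^i) M⁻¹`. -/
theorem inner_iteration_preconditioner_preserves_eigenvectors
    (n : ℕ) (M N : Matrix (Fin n) (Fin n) ℂ) (hM : IsUnit M.det)
    (H : Matrix (Fin n) (Fin n) ℂ) (hH : H = M⁻¹ * N)
    (l : ℕ) (hl : 1 ≤ l)
    (P : Matrix (Fin n) (Fin n) ℂ)
    (hP : P = (1 + ∑ i ∈ Finset.Icc 1 (l - 1), H ^ i) * M⁻¹)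
    (v : Fin n → ℂ) (μ : ℂ) (hv : H.mulVec v = μ • v) :
    (P * (M - N)).mulVec v = (1 - μ ^ l) • v := by
  have hsum : (1 : Matrix (Fin n) (Fin n) ℂ) + ∑ i ∈ Finset.Icc 1 (l - 1), H ^ i
      = ∑ i ∈ Finset.range l, H ^ i := by
    rw [Finset.range_eq_Ico,
      Finset.sum_eq_sum_Ico_succ_bot (by omega : 0 < l) (fun i => H ^ i)]
    have : Finset.Icc 1 (l - 1) = Finset.Ico 1 l := by
      ext i; simp; omega
    rw [this]
    simp
  have key : P * (M - N) = 1 - H ^ l := by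
    have hMN : M⁻¹ * (M - N) = 1 - H := by
      rw [mul_sub, Matrix.nonsing_inv_mul M hM, hH]
    rw [hP, mul_assoc, hMN, hsum]
    -- (∑ i in range l, H^i) * (H - 1) = H^l - 1
    calc (∑ i ∈ Finset.range l, H ^ i) * (1 - H)
        = -((∑ i ∈ Finset.range l, H ^ i) * (H - 1)) := by noncomm_ring
      _ = -(H ^ l - 1) := by rw [geom_sum_mul]
      _ = 1 - H ^ l := by noncomm_ring
  have hpow : ∀ k : ℕ, (H ^ k).mulVec v = μ ^ k • v := by
    intro k
    induction k with
    | zero => simp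
    | succ k ih =>
      rw [pow_succ', ← Matrix.mulVec_mulVec, ih, Matrix.mulVec_smul, hv, pow_succ']
      rw [smul_smul, mul_comm]
  rw [key, Matrix.sub_mulVec, Matrix.one_mulVec, hpow, sub_smul, one_smul]
end
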